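/- Fix γ > 0. For the Cauchy distribution C(σ) with Lebesgue density x ↦ σ/(π(σ² + x²)) and sparsity rate ρ₁(σ) = ∫ (1 − e^{−x²/2}) · σ/(π(σ² + x²)) dx, one has lim_{σ→0⁺} ρ₁(σ)^{−1} · C(σ)([γ, ∞)) = 1/(√(2π) γ). That is, the rescaled Cauchy tail mass converges to the tail of the exceedance measure H₁(dx) = dx/(√(2π) x²). -/

import Mathlib

open MeasureTheory Real Filter

/-- The sparsity rate of the Cauchy distribution `C(σ)` with Lebesgue density
`x ↦ σ/(π(σ² + x²))`. -/
noncomputable def cauchySparsityRate (σ : ℝ) : ℝ :=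
  ∫ x : ℝ, (1 - Real.exp (-(x ^ 2) / 2)) * (σ / (Real.pi * (σ ^ 2 + x ^ 2)))

/-- The mass that `C(σ)` places on `[γ, ∞)`. -/
noncomputable def cauchyTail (σ γ : ℝ) : ℝ :=
  ∫ x in Set.Ici γ, σ / (Real.pi * (σ ^ 2 + x ^ 2))

section Aux

open Set Topology

/-- The standard Gaussian density (unnormalized). -/
noncomputable def gs (x : ℝ) : ℝ := Real.exp (-(x ^ 2) / 2)

lemma gs_eq : gs = fun x : ℝ => Real.exp (-(1/2) * x ^ 2) := by
  funext x; unfold gs; ring_nf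

lemma gs_cont : Continuous gs := by
  unfold gs; fun_prop

lemma gs_integrable : Integrable gs := by
  rw [gs_eq]; exact integrable_exp_neg_mul_sq (by norm_num)

lemma gs_total : ∫ x : ℝ, gs x = Real.sqrt (2 * Real.pi) := by
  rw [gs_eq, integral_gaussian, show (Real.pi / (1/2) : ℝ) = 2 * Real.pi by ring]

/-- The (unnormalized) Gaussian CDF. -/
noncomputable def Phi (x : ℝ) : ℝ := ∫ t in Iic x, gs t

lemma Phi_eq (y : ℝ) : Phi y = Phi 0 + ∫ t in (0:ℝ)..y, gs t := by
  have := intervalIntegral.integral_Iic_sub_Iic (f := gs) (μ := volume)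
    gs_integrable.integrableOn gs_integrable.integrableOn (a := 0) (b := y)
  unfold Phi; linarith

lemma Phi_hasDeriv (x : ℝ) : HasDerivAt Phi (gs x) x := by
  have h : HasDerivAt (fun u => ∫ t in (0:ℝ)..u, gs t) (gs x) x :=
    intervalIntegral.integral_hasDerivAt_right gs_integrable.intervalIntegrable
      (gs_cont.stronglyMeasurableAtFilter _ _) gs_cont.continuousAt
  have := h.const_add (Phi 0)
  refine this.congr_of_eventuallyEq ?_
  filter_upwards with y using (Phi_eq y)

lemma Phi_tendsto : Tendsto Phi atTop (𝓝 (Real.sqrt (2 * Real.pi))) := by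
  have h := tendsto_setIntegral_of_monotone (μ := volume) (f := gs)
    (s := fun r : ℝ => Iic r) (fun r => measurableSet_Iic)
    (fun a b hab => Iic_subset_Iic.mpr hab) (by rw [iUnion_Iic]; exact gs_integrable.integrableOn)
  rw [iUnion_Iic, Measure.restrict_univ, gs_total] at h
  exact h

lemma Phi_zero : Phi 0 = Real.sqrt (2 * Real.pi) / 2 := by
  have habs : ∫ x : ℝ, gs |x| = 2 * ∫ x in Ioi (0:ℝ), gs x := integral_comp_abs
  have heven : ∀ x : ℝ, gs |x| = gs x := fun x => by unfold gs; rw [sq_abs]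
  simp_rw [heven, gs_total] at habs
  have hneg : (∫ x in Iic (0:ℝ), gs (-x)) = ∫ x in Ioi (-(0:ℝ)), gs x :=
    integral_comp_neg_Iic 0 gs
  have heven' : ∀ x : ℝ, gs (-x) = gs x := fun x => by unfold gs; rw [neg_pow]; ring_nf
  simp_rw [heven', neg_zero] at hneg
  unfold Phi
  rw [hneg, habs]; ring

/-- The limiting integrand `(1 - e^{-x²/2})/x²`. -/
noncomputable def hh (x : ℝ) : ℝ := (1 - gs x) / x ^ 2

/-- Antiderivative of `hh` on `(0, ∞)`. -/
noncomputable def G (x : ℝ) : ℝ := (gs x - 1) / x + Phi x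

lemma gs_hasDeriv (x : ℝ) : HasDerivAt gs (-x * gs x) x := by
  have h1 : HasDerivAt (fun y : ℝ => -(y ^ 2) / 2) (-x) x := by
    have := ((hasDerivAt_pow 2 x).neg).div_const 2
    simpa using this.congr_deriv (by push_cast; ring)
  exact ((Real.hasDerivAt_exp _).comp x h1).congr_deriv (by unfold gs; ring)

lemma gs_le_one (x : ℝ) : gs x ≤ 1 := by
  unfold gs
  rw [show (1:ℝ) = Real.exp 0 by simp]
  apply Real.exp_le_exp.mpr
  nlinarith [sq_nonneg x, Real.exp_zero]

lemma hh_nonneg (x : ℝ) : 0 ≤ hh x := by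
  unfold hh
  apply div_nonneg (by linarith [gs_le_one x]) (sq_nonneg x)

lemma G_hasDeriv {x : ℝ} (hx : x ≠ 0) : HasDerivAt G (hh x) x := by
  have h1 : HasDerivAt (fun y => (gs y - 1) / y)
      (((-x * gs x) * x - (gs x - 1) * 1) / x ^ 2) x :=
    ((gs_hasDeriv x).sub_const 1).div (hasDerivAt_id x) hx
  have h2 := h1.add (Phi_hasDeriv x)
  refine h2.congr_deriv ?_
  unfold hh gs
  field_simp
  ring

lemma slope_tendsto_zero : Tendsto (fun x : ℝ => (gs x - 1) / x) (𝓝[≠] 0) (𝓝 0) := by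
  have h := (gs_hasDeriv 0)
  rw [hasDerivAt_iff_tendsto_slope] at h
  have hs : ∀ x : ℝ, slope gs 0 x = (gs x - 1) / x := by
    intro x
    rw [slope_def_field]
    simp [gs]
  simp only [neg_zero, zero_mul] at h
  refine (h.congr (fun x => (hs x))).congr' ?_ |>.mono_left le_rfl
  rfl

lemma G_cont0 : ContinuousWithinAt G (Ici 0) 0 := by
  rw [← continuousWithinAt_Ioi_iff_Ici]
  have hG0 : G 0 = Phi 0 := by unfold G gs; simp
  unfold ContinuousWithinAt
  rw [hG0]
  have h1 : Tendsto (fun x : ℝ => (gs x - 1) / x) (𝓝[Set.Ioi 0] 0) (𝓝 0) :=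
    slope_tendsto_zero.mono_left (nhdsWithin_mono 0 (fun x hx => ne_of_gt hx))
  have h2 : Tendsto Phi (𝓝[Set.Ioi 0] 0) (𝓝 (Phi 0)) :=
    ((Phi_hasDeriv 0).continuousAt.tendsto).mono_left nhdsWithin_le_nhds
  have := h1.add h2
  rw [zero_add] at this
  exact this

lemma gs_tendsto_top : Tendsto gs atTop (𝓝 0) := by
  have h : Tendsto (fun x : ℝ => -(x ^ 2) / 2) atTop atBot := by
    apply Tendsto.atBot_div_const (by norm_num : (0:ℝ) < 2)
    exact tendsto_neg_atTop_atBot.comp (tendsto_pow_atTop (two_ne_zero))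
  exact Real.tendsto_exp_atBot.comp h

lemma G_tendsto_top : Tendsto G atTop (𝓝 (Real.sqrt (2 * Real.pi))) := by
  have h1 : Tendsto (fun x : ℝ => (gs x - 1) / x) atTop (𝓝 0) := by
    have := ((gs_tendsto_top.sub_const 1).mul tendsto_inv_atTop_zero)
    simp only [zero_sub, mul_zero] at this
    exact this.congr (fun x => (div_eq_mul_inv _ _).symm)
  have := h1.add Phi_tendsto
  rw [zero_add] at this
  exact this

lemma hh_integrableOn_Ioi : IntegrableOn hh (Ioi 0) := by
  exact integrableOn_Ioi_deriv_of_nonneg G_cont0 (fun x hx => G_hasDeriv (ne_of_gt hx))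
    (fun x _ => hh_nonneg x) G_tendsto_top

lemma hh_integral_Ioi : ∫ x in Ioi (0:ℝ), hh x = Real.sqrt (2 * Real.pi) / 2 := by
  rw [integral_Ioi_of_hasDerivAt_of_nonneg G_cont0 (fun x hx => G_hasDeriv (ne_of_gt hx))
    (fun x _ => hh_nonneg x) G_tendsto_top]
  have hG0 : G 0 = Phi 0 := by unfold G gs; simp
  rw [hG0, Phi_zero]; ring

lemma hh_even (x : ℝ) : hh (-x) = hh x := by
  unfold hh gs; rw [neg_pow]; ring_nf

lemma hh_integrable : Integrable hh := by
  have m : MeasurableEmbedding (fun x : ℝ => -x) :=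
    (Homeomorph.neg ℝ).measurableEmbedding
  have hIic : IntegrableOn hh (Iic 0) := by
    rw [← Measure.map_neg_eq_self (volume : Measure ℝ)]
    rw [m.integrableOn_map_iff]
    have : (hh ∘ fun x : ℝ => -x) = hh := by funext x; exact hh_even x
    rw [this]
    have : (fun x : ℝ => -x) ⁻¹' (Iic 0) = Ici 0 := by
      ext x; simp
    rw [this]
    exact Iff.mpr integrableOn_Ici_iff_integrableOn_Ioi hh_integrableOn_Ioi
  have := hIic.union hh_integrableOn_Ioi
  rwa [Iic_union_Ioi, integrableOn_univ] at this

lemma hh_total : ∫ x : ℝ, hh x = Real.sqrt (2 * Real.pi) := by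
  have habs : ∫ x : ℝ, hh |x| = 2 * ∫ x in Ioi (0:ℝ), hh x := integral_comp_abs
  have heven : ∀ x : ℝ, hh |x| = hh x := by
    intro x
    rcases abs_choice x with h | h <;> rw [h]
    exact hh_even x
  simp_rw [heven, hh_integral_Ioi] at habs
  rw [habs]; ring

/-- The rescaled sparsity integral. -/
noncomputable def II (σ : ℝ) : ℝ := ∫ x : ℝ, (1 - gs x) / (Real.pi * (σ ^ 2 + x ^ 2))

lemma ae_ne_zero : ∀ᵐ x : ℝ, x ≠ 0 := by
  rw [ae_iff]
  simp only [ne_eq, not_not, setOf_eq_eq_singleton]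
  exact Real.volume_singleton

lemma II_tendsto : Tendsto II (𝓝[>] (0:ℝ)) (𝓝 (Real.sqrt (2 * Real.pi) / Real.pi)) := by
  have hbnd : Integrable (fun x : ℝ => hh x / Real.pi) := hh_integrable.div_const _
  have key : Tendsto (fun σ => ∫ x : ℝ, (1 - gs x) / (Real.pi * (σ ^ 2 + x ^ 2)))
      (𝓝[>] (0:ℝ)) (𝓝 (∫ x : ℝ, hh x / Real.pi)) := by
    apply tendsto_integral_filter_of_dominated_convergence (fun x => hh x / Real.pi)
    · filter_upwards [self_mem_nhdsWithin] with σ hσ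
      have hσ' : (0:ℝ) < σ := hσ
      apply Continuous.aestronglyMeasurable
      apply Continuous.div (continuous_const.sub gs_cont) (by fun_prop)
      intro x
      positivity
    · filter_upwards [self_mem_nhdsWithin] with σ hσ
      have hσ' : (0:ℝ) < σ := hσ
      filter_upwards [ae_ne_zero] with x hx
      have h1 : (0:ℝ) ≤ 1 - gs x := by linarith [gs_le_one x]
      have hx2 : (0:ℝ) < x ^ 2 := by positivity
      rw [Real.norm_eq_abs, abs_of_nonneg (by positivity)]
      unfold hh
      rw [div_div]
      apply div_le_div_of_nonneg_left h1 (by positivity)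
      nlinarith [Real.pi_pos, sq_nonneg σ]
    · exact hbnd
    · filter_upwards [ae_ne_zero] with x hx
      have hx2 : (0:ℝ) < x ^ 2 := by positivity
      have hc : Tendsto (fun σ : ℝ => Real.pi * (σ ^ 2 + x ^ 2)) (𝓝 0)
          (𝓝 (Real.pi * (0 ^ 2 + x ^ 2))) := by
        exact (Continuous.tendsto (by fun_prop) 0)
      have hne : Real.pi * ((0:ℝ) ^ 2 + x ^ 2) ≠ 0 := by positivity
      have := (tendsto_const_nhds (x := (1 - gs x)) (f := 𝓝 (0:ℝ))).div hc hne
      have h2 := this.mono_left (nhdsWithin_le_nhds (s := Set.Ioi (0:ℝ)))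
      convert h2 using 2
      · rfl
      unfold hh
      rw [div_div]
      ring_nf
  have : ∫ x : ℝ, hh x / Real.pi = Real.sqrt (2 * Real.pi) / Real.pi := by
    rw [integral_div, hh_total]
  rwa [this] at key

lemma rate_eq (σ : ℝ) : cauchySparsityRate σ = σ * II σ := by
  unfold cauchySparsityRate II gs
  rw [← integral_const_mul]
  congr 1
  funext x
  ring

lemma tail_eq {σ γ : ℝ} (hσ : 0 < σ) (hγ : 0 < γ) :
    cauchyTail σ γ = Real.arctan (σ / γ) / Real.pi := by
  have hσ' : σ ≠ 0 := ne_of_gt hσ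
  have hπ : Real.pi ≠ 0 := Real.pi_ne_zero
  have hderiv : ∀ x ∈ Ioi γ, HasDerivAt (fun y => Real.arctan (y / σ) / Real.pi)
      (σ / (Real.pi * (σ ^ 2 + x ^ 2))) x := by
    intro x _
    have h1 : HasDerivAt (fun y : ℝ => y / σ) (1 / σ) x := by
      simpa using (hasDerivAt_id x).div_const σ
    have h2 := ((Real.hasDerivAt_arctan (x / σ)).comp x h1).div_const Real.pi
    refine h2.congr_deriv ?_
    field_simp
  have hcont : ContinuousWithinAt (fun y => Real.arctan (y / σ) / Real.pi) (Ici γ) γ := by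
    exact ((Real.continuous_arctan.comp (continuous_id.div_const σ)).div_const
      Real.pi).continuousWithinAt
  have htop : Tendsto (fun y => Real.arctan (y / σ) / Real.pi) atTop
      (𝓝 ((Real.pi / 2) / Real.pi)) := by
    apply Tendsto.div_const
    have h1 : Tendsto (fun y : ℝ => y / σ) atTop atTop :=
      tendsto_id.atTop_div_const hσ
    exact (Real.tendsto_arctan_atTop.mono_right nhdsWithin_le_nhds).comp h1
  have hnonneg : ∀ x ∈ Ioi γ, 0 ≤ σ / (Real.pi * (σ ^ 2 + x ^ 2)) := by
    intro x _
    positivity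
  have := integral_Ioi_of_hasDerivAt_of_nonneg hcont hderiv hnonneg htop
  unfold cauchyTail
  rw [integral_Ici_eq_integral_Ioi, this]
  have harc : Real.arctan (σ / γ) = Real.pi / 2 - Real.arctan (γ / σ) := by
    have := Real.arctan_inv_of_pos (div_pos hγ hσ)
    rwa [inv_div] at this
  rw [harc]
  ring

lemma slope_arctan {γ : ℝ} (hγ : 0 < γ) :
    Tendsto (fun σ : ℝ => Real.arctan (σ / γ) / σ) (𝓝[>] (0:ℝ)) (𝓝 γ⁻¹) := by
  have hd : HasDerivAt (fun σ : ℝ => Real.arctan (σ / γ)) γ⁻¹ 0 := by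
    have h1 : HasDerivAt (fun σ : ℝ => σ / γ) (1 / γ) 0 := by
      simpa using (hasDerivAt_id (0:ℝ)).div_const γ
    have h2 := (Real.hasDerivAt_arctan ((0:ℝ) / γ)).comp 0 h1
    refine h2.congr_deriv ?_
    simp
  rw [hasDerivAt_iff_tendsto_slope] at hd
  have hs : ∀ σ : ℝ, slope (fun σ : ℝ => Real.arctan (σ / γ)) 0 σ
      = Real.arctan (σ / γ) / σ := by
    intro σ
    rw [slope_def_field]
    simp
  have := hd.mono_left (nhdsWithin_mono 0 (fun x hx => ne_of_gt hx))
  exact Tendsto.congr (fun σ => hs σ) this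

end Aux

/-- for fixed `γ > 0`, the rescaled Cauchy tail mass satisfies
`ρ₁(σ)⁻¹ · C(σ)([γ,∞)) → 1/(√(2π) γ)` as `σ → 0⁺`. -/
theorem stmt17 (γ : ℝ) (hγ : 0 < γ) :
    Tendsto (fun σ : ℝ => (cauchySparsityRate σ)⁻¹ * cauchyTail σ γ)
      (nhdsWithin 0 (Set.Ioi 0)) (nhds (1 / (Real.sqrt (2 * Real.pi) * γ))) := by
  have hsqrt : (0:ℝ) < Real.sqrt (2 * Real.pi) :=
    Real.sqrt_pos.mpr (by positivity)
  have hne : Real.sqrt (2 * Real.pi) / Real.pi ≠ 0 :=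
    div_ne_zero (ne_of_gt hsqrt) Real.pi_ne_zero
  have hmain : Tendsto (fun σ : ℝ => (II σ)⁻¹ * ((Real.arctan (σ / γ) / σ) * Real.pi⁻¹))
      (nhdsWithin (0:ℝ) (Set.Ioi 0))
      (nhds ((Real.sqrt (2 * Real.pi) / Real.pi)⁻¹ * (γ⁻¹ * Real.pi⁻¹))) :=
    (II_tendsto.inv₀ hne).mul ((slope_arctan hγ).mul_const _)
  have hval : (Real.sqrt (2 * Real.pi) / Real.pi)⁻¹ * (γ⁻¹ * Real.pi⁻¹)
      = 1 / (Real.sqrt (2 * Real.pi) * γ) := by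
    field_simp
  rw [hval] at hmain
  refine hmain.congr' ?_
  filter_upwards [self_mem_nhdsWithin] with σ hσ
  have hσ' : (0:ℝ) < σ := hσ
  rw [rate_eq, tail_eq hσ' hγ, mul_inv]
  field_simp
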